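/- arXiv:1811.07179 — 2 statements merged into one kernel-verified Lean document; each statement's English description precedes it below -/
import Mathlib

section
/- Let P be a row-stochastic matrix (CPT) from a finite set X to a finite set Y with rows p_x, and let π_1, π_2 be probability mass functions on X with induced marginals ρ_j(y) = Σ_x π_j(x) p_x(y) for j = 1,2. Then d_V(ρ_1, ρ_2) ≤ d⁺(P) · d_V(π_1, π_2), where d⁺(P) = max_{x,x'} d_V(p_x, p_{x'}) is the diameter of P. -/
/-! Write `δ = π₁ - π₂ = δ⁺ - δ⁻`. Since `∑ δ = 0`, the positive and negative parts both have
mass `t = d_V(π₁, π₂)`, and pairing them gives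
`t • (ρ₁ - ρ₂) = ∑_{x,x'} δ⁺(x) δ⁻(x') • (p_x - p_{x'})`,
a nonnegative combination of row differences with total weight `t²`. Taking `ℓ¹` norms yields
`t · d_V(ρ₁, ρ₂) ≤ t² · d⁺(P)`; the case `t = 0` is trivial. -/

noncomputable def dV {Z : Type*} [Fintype Z] (p q : Z → ℝ) : ℝ :=
  (1/2) * ∑ z, |p z - q z|

def IsPMF {Z : Type*} [Fintype Z] (p : Z → ℝ) : Prop :=
  (∀ z, 0 ≤ p z) ∧ ∑ z, p z = 1

noncomputable def diam {X Y : Type*} [Fintype X] [Fintype Y]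
    (P : X → Y → ℝ) : ℝ :=
  ⨆ x : X, ⨆ x' : X, dV (P x) (P x')

open Finset

section TotalVariation

variable {Z : Type*} [Fintype Z]

lemma dV_self (p : Z → ℝ) : dV p p = 0 := by
  simp [dV]

lemma eq_of_dV_eq_zero {p q : Z → ℝ} (h : dV p q = 0) : p = q := by
  have hsum : ∑ z, |p z - q z| = 0 := by
    unfold dV at h
    linarith
  funext z
  have := (sum_eq_zero_iff_of_nonneg fun z _ => abs_nonneg (p z - q z)).1 hsum z (mem_univ z)
  linarith [abs_eq_zero.1 this]

lemma dV_nonneg (p q : Z → ℝ) : 0 ≤ dV p q :=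
  mul_nonneg (by norm_num) (sum_nonneg fun z _ => abs_nonneg _)

lemma sum_posPart_sub_eq_dV {p q : Z → ℝ} (h : ∑ z, p z = ∑ z, q z) :
    ∑ z, (p z - q z)⁺ = dV p q ∧ ∑ z, (p z - q z)⁻ = dV p q := by
  have hdiff : ∑ z, (p z - q z)⁺ - ∑ z, (p z - q z)⁻ = 0 := by
    rw [← sum_sub_distrib]
    simp only [posPart_sub_negPart, sum_sub_distrib, h, sub_self]
  have hadd : ∑ z, (p z - q z)⁺ + ∑ z, (p z - q z)⁻ = 2 * dV p q := by
    simp only [← sum_add_distrib, posPart_add_negPart, dV]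
    ring
  constructor <;> linarith

end TotalVariation

lemma dV_le_diam {X Y : Type*} [Fintype X] [Fintype Y] (P : X → Y → ℝ) (x x' : X) :
    dV (P x) (P x') ≤ diam P :=
  (le_ciSup (Set.finite_range _).bddAbove x').trans
    (le_ciSup (f := fun x => ⨆ x', dV (P x) (P x')) (Set.finite_range _).bddAbove x)

lemma sum_posPart_mul_sum_mul_eq {X : Type*} [Fintype X] {δ : X → ℝ} (hδ : ∑ x, δ x = 0)
    (v : X → ℝ) :
    (∑ x, (δ x)⁺) * ∑ x, δ x * v x = ∑ x, ∑ x', (δ x)⁺ * (δ x')⁻ * (v x - v x') := by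
  have hneg : ∑ x, (δ x)⁻ = ∑ x, (δ x)⁺ := by
    have : ∑ x, ((δ x)⁺ - (δ x)⁻) = 0 := by simpa only [posPart_sub_negPart] using hδ
    rw [sum_sub_distrib] at this
    linarith
  have hsplit : ∑ x, δ x * v x = ∑ x, (δ x)⁺ * v x - ∑ x, (δ x)⁻ * v x := by
    rw [← sum_sub_distrib]
    exact sum_congr rfl fun x _ => by rw [← sub_mul, posPart_sub_negPart]
  calc (∑ x, (δ x)⁺) * ∑ x, δ x * v x
      = (∑ x, (δ x)⁺ * v x) * ∑ x', (δ x')⁻ - (∑ x, (δ x)⁺) * ∑ x', (δ x')⁻ * v x' := by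
        rw [hsplit, hneg]; ring
    _ = ∑ x, ∑ x', (δ x)⁺ * (δ x')⁻ * (v x - v x') := by
        simp only [sum_mul_sum, ← sum_sub_distrib]
        exact sum_congr rfl fun x _ => sum_congr rfl fun x' _ => by ring

section Marginal

variable {X Y : Type*} [Fintype X] [Fintype Y]

lemma dV_mul_dV_marginal_le (P : X → Y → ℝ) {π1 π2 : X → ℝ} (h : ∑ x, π1 x = ∑ x, π2 x) :
    dV π1 π2 * dV (fun y => ∑ x, π1 x * P x y) (fun y => ∑ x, π2 x * P x y) ≤
      dV π1 π2 * (diam P * dV π1 π2) := by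
  set t := dV π1 π2
  set δ : X → ℝ := fun x => π1 x - π2 x
  obtain ⟨hpos, hneg⟩ : ∑ x, (δ x)⁺ = t ∧ ∑ x, (δ x)⁻ = t := sum_posPart_sub_eq_dV h
  have ht : 0 ≤ t := dV_nonneg π1 π2
  have hδ : ∑ x, δ x = 0 := by simp only [δ, sum_sub_distrib, h, sub_self]
  have hcomb : ∀ y, t * |∑ x, π1 x * P x y - ∑ x, π2 x * P x y|
      = |∑ x, ∑ x', (δ x)⁺ * (δ x')⁻ * (P x y - P x' y)| := fun y => by
    rw [← sum_posPart_mul_sum_mul_eq hδ, hpos, abs_mul, abs_of_nonneg ht,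
      ← sum_sub_distrib]
    simp only [δ, sub_mul]
  calc t * dV (fun y => ∑ x, π1 x * P x y) (fun y => ∑ x, π2 x * P x y)
      = 1 / 2 * ∑ y, |∑ x, ∑ x', (δ x)⁺ * (δ x')⁻ * (P x y - P x' y)| := by
        simp only [dV, ← hcomb, ← mul_sum]; ring
    _ ≤ 1 / 2 * ∑ y, ∑ x, ∑ x', (δ x)⁺ * (δ x')⁻ * |P x y - P x' y| := by
        gcongr with y
        refine (abs_sum_le_sum_abs _ _).trans (sum_le_sum fun x _ => ?_)
        refine (abs_sum_le_sum_abs _ _).trans (sum_le_sum fun x' _ => ?_)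
        rw [abs_mul, abs_of_nonneg (by positivity)]
    _ = ∑ x, ∑ x', (δ x)⁺ * (δ x')⁻ * dV (P x) (P x') := by
        simp only [dV, mul_sum]
        rw [sum_comm]
        refine sum_congr rfl fun x _ => ?_
        rw [sum_comm]
        exact sum_congr rfl fun x' _ => sum_congr rfl fun y _ => by ring
    _ ≤ ∑ x, ∑ x', (δ x)⁺ * (δ x')⁻ * diam P := by
        gcongr with x _ x' _
        exact dV_le_diam P x x'
    _ = t * (diam P * t) := by
        simp only [← sum_mul, ← mul_sum, hpos, hneg]
        ring

theorem dV_marginal_le_diam_mul_dV (P : X → Y → ℝ) {π1 π2 : X → ℝ}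
    (h : ∑ x, π1 x = ∑ x, π2 x) :
    dV (fun y => ∑ x, π1 x * P x y) (fun y => ∑ x, π2 x * P x y) ≤ diam P * dV π1 π2 := by
  rcases (dV_nonneg π1 π2).eq_or_lt with h0 | hpos
  · obtain rfl := eq_of_dV_eq_zero h0.symm
    rw [dV_self, dV_self, mul_zero]
  · exact le_of_mul_le_mul_left (dV_mul_dV_marginal_le P h) hpos

end Marginal

theorem stmt3_general {X Y : Type*} [Fintype X] [Fintype Y]
    (P : X → Y → ℝ)
    (π1 π2 : X → ℝ) (hπ1 : IsPMF π1) (hπ2 : IsPMF π2) :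
    dV (fun y => ∑ x, π1 x * P x y) (fun y => ∑ x, π2 x * P x y) ≤
      diam P * dV π1 π2 :=
  dV_marginal_le_diam_mul_dV P (hπ1.2.trans hπ2.2.symm)

theorem stmt3 {X Y : Type*} [Fintype X] [Fintype Y] [Nonempty X]
    (P : X → Y → ℝ) (hP : ∀ x, IsPMF (P x))
    (π1 π2 : X → ℝ) (hπ1 : IsPMF π1) (hπ2 : IsPMF π2) :
    dV (fun y => ∑ x, π1 x * P x y) (fun y => ∑ x, π2 x * P x y) ≤
      diam P * dV π1 π2 :=
  stmt3_general P π1 π2 hπ1 hπ2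
end

section
/- Let P_1, P_2 be CPTs from finite set X to finite set Y, and π_1, π_2 probability mass functions on X with induced marginals ρ_j(y) = Σ_x π_j(x) (P_j)_x(y). Then d_V(ρ_1, ρ_2) ≤ d_V⁺(P_1,P_2) + d_V(π_1, π_2) · d_V*(P_1, P_2). -/
noncomputable def dVplus {X Y : Type*} [Fintype X] [Fintype Y]
    (P Q : X → Y → ℝ) : ℝ :=
  ⨆ x : X, dV (P x) (Q x)

noncomputable def dVstar {X Y : Type*} [Fintype X] [Fintype Y]
    (P Q : X → Y → ℝ) : ℝ :=
  ⨆ x : X, ⨆ x' : X, dV (P x) (Q x')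

open Finset

noncomputable def marginal {X Y : Type*} [Fintype X] (π : X → ℝ) (P : X → Y → ℝ) : Y → ℝ :=
  fun y => ∑ x, π x * P x y

section TotalVariation

variable {Z : Type*} [Fintype Z]

lemma dV_comm (p q : Z → ℝ) : dV p q = dV q p := by
  simp only [dV, abs_sub_comm]

lemma dV_add_le (p p' q q' : Z → ℝ) : dV (p + p') (q + q') ≤ dV p q + dV p' q' := by
  unfold dV
  rw [← mul_add, ← sum_add_distrib]
  gcongr with z
  calc |(p + p') z - (q + q') z| = |(p z - q z) + (p' z - q' z)| := by
        simp only [Pi.add_apply]; ring_nf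
    _ ≤ |p z - q z| + |p' z - q' z| := abs_add_le _ _

lemma dV_smul {c : ℝ} (hc : 0 ≤ c) (p q : Z → ℝ) : dV (c • p) (c • q) = c * dV p q := by
  simp only [dV, Pi.smul_apply, smul_eq_mul, ← mul_sub, abs_mul, abs_of_nonneg hc, ← mul_sum]
  ring

lemma sum_sub_min_eq_dV {p q : Z → ℝ} (h : ∑ z, p z = ∑ z, q z) :
    ∑ z, (p z - min (p z) (q z)) = dV p q := by
  have hsum : ∑ z, (p z - min (p z) (q z)) + ∑ z, (q z - min (p z) (q z)) = 2 * dV p q := by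
    rw [← sum_add_distrib, dV, ← mul_assoc, mul_one_div_cancel two_ne_zero, one_mul]
    refine sum_congr rfl fun z _ => ?_
    linarith [min_add_max (p z) (q z), max_sub_min_eq_abs' (p z) (q z)]
  have hdiff : ∑ z, (p z - min (p z) (q z)) - ∑ z, (q z - min (p z) (q z)) = 0 := by
    simp only [sum_sub_distrib, h, sub_self]
  linarith

end TotalVariation

section Marginal

variable {X X' Y : Type*} [Fintype X] [Fintype X']

lemma marginal_add (π π' : X → ℝ) (P : X → Y → ℝ) :
    marginal (π + π') P = marginal π P + marginal π' P := by
  ext y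
  simp only [marginal, Pi.add_apply, add_mul, sum_add_distrib]

lemma marginal_zero (P : X → Y → ℝ) : marginal 0 P = 0 := by
  ext y
  simp [marginal]

lemma marginal_prod_fst (a : X → ℝ) (b : X' → ℝ) (P : X → Y → ℝ) :
    marginal (fun i : X × X' => a i.1 * b i.2) (fun i => P i.1) = (∑ x', b x') • marginal a P := by
  ext y
  simp only [marginal, Fintype.sum_prod_type, Pi.smul_apply, smul_eq_mul, mul_sum, sum_mul]
  exact sum_congr rfl fun x _ => sum_congr rfl fun x' _ => by ring

lemma marginal_prod_snd (a : X → ℝ) (b : X' → ℝ) (Q : X' → Y → ℝ) :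
    marginal (fun i : X × X' => a i.1 * b i.2) (fun i => Q i.2) = (∑ x, a x) • marginal b Q := by
  ext y
  simp only [marginal, Fintype.sum_prod_type, Pi.smul_apply, smul_eq_mul, sum_mul, mul_sum]
  rw [sum_comm]
  exact sum_congr rfl fun x _ => sum_congr rfl fun x' _ => by ring

lemma dV_marginal_le [Fintype Y] {w : X → ℝ} (hw : ∀ x, 0 ≤ w x) (P Q : X → Y → ℝ) :
    dV (marginal w P) (marginal w Q) ≤ ∑ x, w x * dV (P x) (Q x) := by
  calc dV (marginal w P) (marginal w Q)
      ≤ (1/2) * ∑ y, ∑ x, w x * |P x y - Q x y| := by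
        unfold dV marginal
        gcongr with y
        rw [← sum_sub_distrib]
        refine (abs_sum_le_sum_abs _ _).trans_eq (sum_congr rfl fun x _ => ?_)
        rw [← mul_sub, abs_mul, abs_of_nonneg (hw x)]
    _ = ∑ x, w x * dV (P x) (Q x) := by
        simp only [dV, mul_sum]
        rw [sum_comm]
        exact sum_congr rfl fun x _ => sum_congr rfl fun y _ => by ring

end Marginal

section Bounds

variable {X Y : Type*} [Fintype X] [Fintype Y]

lemma dV_le_dVplus (P Q : X → Y → ℝ) (x : X) : dV (P x) (Q x) ≤ dVplus P Q :=
  le_ciSup (f := fun x => dV (P x) (Q x)) (Set.finite_range _).bddAbove x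

lemma dV_le_dVstar (P Q : X → Y → ℝ) (x x' : X) : dV (P x) (Q x') ≤ dVstar P Q :=
  (le_ciSup (Set.finite_range _).bddAbove x').trans
    (le_ciSup (f := fun x => ⨆ x', dV (P x) (Q x')) (Set.finite_range _).bddAbove x)

lemma dVplus_nonneg (P Q : X → Y → ℝ) : 0 ≤ dVplus P Q :=
  Real.iSup_nonneg fun x => dV_nonneg (P x) (Q x)

lemma dV_marginal_le_dVplus {w : X → ℝ} (hw : ∀ x, 0 ≤ w x) (hw_sum : ∑ x, w x ≤ 1)
    (P Q : X → Y → ℝ) : dV (marginal w P) (marginal w Q) ≤ dVplus P Q :=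
  calc dV (marginal w P) (marginal w Q)
      ≤ ∑ x, w x * dV (P x) (Q x) := dV_marginal_le hw P Q
    _ ≤ ∑ x, w x * dVplus P Q :=
        sum_le_sum fun x _ => mul_le_mul_of_nonneg_left (dV_le_dVplus P Q x) (hw x)
    _ = (∑ x, w x) * dVplus P Q := (sum_mul _ _ _).symm
    _ ≤ dVplus P Q := mul_le_of_le_one_left (dVplus_nonneg P Q) hw_sum

lemma dV_marginal_le_dVstar {a b : X → ℝ} (ha : ∀ x, 0 ≤ a x) (hb : ∀ x, 0 ≤ b x)
    (hab : ∑ x, a x = ∑ x, b x) (P Q : X → Y → ℝ) :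
    dV (marginal a P) (marginal b Q) ≤ (∑ x, a x) * dVstar P Q := by
  set d := ∑ x, a x
  rcases (sum_nonneg fun x _ => ha x : 0 ≤ d).eq_or_lt with hd0 | hd0
  · have ha0 : a = 0 := funext fun x =>
      (sum_eq_zero_iff_of_nonneg fun x _ => ha x).1 hd0.symm x (mem_univ x)
    have hb0 : b = 0 := funext fun x =>
      (sum_eq_zero_iff_of_nonneg fun x _ => hb x).1 (hab ▸ hd0.symm) x (mem_univ x)
    simp [d, ha0, hb0, marginal_zero, dV_self]
  set c : X × X → ℝ := fun i => a i.1 * b i.2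
  have hc : ∀ i, 0 ≤ c i := fun i => mul_nonneg (ha i.1) (hb i.2)
  refine le_of_mul_le_mul_left ?_ hd0
  calc d * dV (marginal a P) (marginal b Q)
      = dV (marginal c fun i => P i.1) (marginal c fun i => Q i.2) := by
        rw [marginal_prod_fst, marginal_prod_snd, ← hab, dV_smul hd0.le]
    _ ≤ ∑ i, c i * dV (P i.1) (Q i.2) := dV_marginal_le hc _ _
    _ ≤ ∑ i, c i * dVstar P Q :=
        sum_le_sum fun i _ => mul_le_mul_of_nonneg_left (dV_le_dVstar P Q i.1 i.2) (hc i)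
    _ = d * (d * dVstar P Q) := by
        rw [← sum_mul, Fintype.sum_prod_type, ← sum_mul_sum, ← hab]
        ring

end Bounds

theorem stmt6_general {X Y : Type*} [Fintype X] [Fintype Y]
    (P1 P2 : X → Y → ℝ)
    (π1 π2 : X → ℝ) (hπ1 : IsPMF π1) (hπ2 : IsPMF π2) :
    dV (fun y => ∑ x, π1 x * P1 x y) (fun y => ∑ x, π2 x * P2 x y) ≤
      dVplus P1 P2 + dV π1 π2 * dVstar P1 P2 := by
  set m : X → ℝ := fun x => min (π1 x) (π2 x)
  set a : X → ℝ := fun x => π1 x - m x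
  set b : X → ℝ := fun x => π2 x - m x
  have hπ1_eq : π1 = m + a := by ext x; simp [a]
  have hπ2_eq : π2 = m + b := by ext x; simp [b]
  have hm_sum : ∑ x, m x ≤ 1 := hπ1.2 ▸ sum_le_sum fun x _ => min_le_left _ _
  have ha_sum : ∑ x, a x = dV π1 π2 := sum_sub_min_eq_dV (hπ1.2.trans hπ2.2.symm)
  have hb_sum : ∑ x, b x = dV π1 π2 := by
    simpa only [b, m, min_comm, dV_comm] using sum_sub_min_eq_dV (hπ2.2.trans hπ1.2.symm)
  calc dV (marginal π1 P1) (marginal π2 P2)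
      = dV (marginal m P1 + marginal a P1) (marginal m P2 + marginal b P2) := by
        rw [← marginal_add, ← marginal_add, ← hπ1_eq, ← hπ2_eq]
    _ ≤ dV (marginal m P1) (marginal m P2) + dV (marginal a P1) (marginal b P2) :=
        dV_add_le _ _ _ _
    _ ≤ dVplus P1 P2 + dV π1 π2 * dVstar P1 P2 := by
        refine add_le_add
          (dV_marginal_le_dVplus (fun x => le_min (hπ1.1 x) (hπ2.1 x)) hm_sum _ _) ?_
        rw [← ha_sum]
        exact dV_marginal_le_dVstar (fun x => sub_nonneg.2 (min_le_left _ _))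
          (fun x => sub_nonneg.2 (min_le_right _ _)) (ha_sum.trans hb_sum.symm) _ _

theorem stmt6 {X Y : Type*} [Fintype X] [Fintype Y] [Nonempty X]
    (P1 P2 : X → Y → ℝ) (hP1 : ∀ x, IsPMF (P1 x)) (hP2 : ∀ x, IsPMF (P2 x))
    (π1 π2 : X → ℝ) (hπ1 : IsPMF π1) (hπ2 : IsPMF π2) :
    dV (fun y => ∑ x, π1 x * P1 x y) (fun y => ∑ x, π2 x * P2 x y) ≤
      dVplus P1 P2 + dV π1 π2 * dVstar P1 P2 :=
  stmt6_general P1 P2 π1 π2 hπ1 hπ2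
end
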